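/- Let U, V ⊆ ℝ² be open, let γ : V → U be a C¹ bijection with det(Dγ(s)) > 0 for all s ∈ V, let f : U → ℝ³ be C¹ with g = g_f invertible on U, let n : U → ℝ³ be a C¹ vector field with n·fᵤ = n·fᵥ = 0 on U, and let h : U → ℝ be C¹. Fix a, b, c ∈ ℝ. Define on U: II = −(Dn)ᵀ(Df), H = ½ Tr(g⁻¹ II), K = det(g⁻¹ II), and ∇h = (∂ᵤh, ∂ᵥh) ∈ ℝ²; define the corresponding quantities g̃, H̃, K̃, ∇h̃ on V from f̃ = f∘γ, ñ = n∘γ, h̃ = h∘γ. If the function x ↦ (det g)^{1/2} ( h²(8a(H² − K) + 16bH²) + c (∇h)ᵀ g⁻¹ ∇h )(x) is Lebesgue integrable on U, then ∫_V (det g̃)^{1/2} ( h̃² (8a(H̃² − K̃) + 16b H̃²) + c (∇h̃)ᵀ g̃⁻¹ ∇h̃ ) ds = ∫_U (det g)^{1/2} ( h²(8a(H² − K) + 16bH²) + c (∇h)ᵀ g⁻¹ ∇h ) dx. (This is the reparameterization invariance of the elastic metric restricted to normal vector fields h·n, whose integrand equals |g|^{1/2}( h²(2a(κ₁−κ₂)²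 + 4b(κ₁+κ₂)²) + c ∇hᵀ g⁻¹ ∇h ) in terms of the principal curvatures κ₁, κ₂, since (κ₁−κ₂)² = 4(H²−K) and (κ₁+κ₂)² = 4H².) -/

import Mathlib

open Matrix MeasureTheory

noncomputable section

/-- Partial derivative of a map from ℝ² in direction `i` (image of `eᵢ` under the Fréchet derivative). -/
def pd (f : (Fin 2 → ℝ) → (Fin 3 → ℝ)) (x : Fin 2 → ℝ) (i : Fin 2) : Fin 3 → ℝ :=
  fderiv ℝ f x (Pi.single i 1)

/-- Jacobian matrix of a map ℝ² → ℝ². -/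
def Jmat (γ : (Fin 2 → ℝ) → (Fin 2 → ℝ)) (s : Fin 2 → ℝ) : Matrix (Fin 2) (Fin 2) ℝ :=
  Matrix.of fun i j => fderiv ℝ γ s (Pi.single j 1) i

/-- First fundamental form (Gram matrix of the partial derivatives) of a parameterized surface. -/
def gmat (f : (Fin 2 → ℝ) → (Fin 3 → ℝ)) (x : Fin 2 → ℝ) : Matrix (Fin 2) (Fin 2) ℝ :=
  Matrix.of fun i j => pd f x i ⬝ᵥ pd f x j

/-- Second fundamental form matrix of a pair (surface, normal field): `II = −(Dn)ᵀ(Df)`. -/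
def IImat (f n : (Fin 2 → ℝ) → (Fin 3 → ℝ)) (x : Fin 2 → ℝ) : Matrix (Fin 2) (Fin 2) ℝ :=
  Matrix.of fun i j => -(pd n x i ⬝ᵥ pd f x j)

/-- Mean curvature `H = ½ Tr(g⁻¹ II)`. -/
def meanCurv (f n : (Fin 2 → ℝ) → (Fin 3 → ℝ)) (x : Fin 2 → ℝ) : ℝ :=
  1 / 2 * ((gmat f x)⁻¹ * IImat f n x).trace

/-- Gauss curvature `K = det(g⁻¹ II)`. -/
def gaussCurv (f n : (Fin 2 → ℝ) → (Fin 3 → ℝ)) (x : Fin 2 → ℝ) : ℝ :=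
  ((gmat f x)⁻¹ * IImat f n x).det

/-- Gradient (vector of partial derivatives) of a scalar function on ℝ². -/
def gradh (h : (Fin 2 → ℝ) → ℝ) (x : Fin 2 → ℝ) : Fin 2 → ℝ :=
  fun i => fderiv ℝ h x (Pi.single i 1)

/-- Integrand of the elastic metric restricted to normal vector fields `h·n`:
`|g|^{1/2} ( h²(8a(H² − K) + 16bH²) + c ∇hᵀ g⁻¹ ∇h )`. -/
def normalElasticIntegrand (f n : (Fin 2 → ℝ) → (Fin 3 → ℝ)) (h : (Fin 2 → ℝ) → ℝ)
    (a b c : ℝ) (x : Fin 2 → ℝ) : ℝ :=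
  Real.sqrt (gmat f x).det *
    ((h x) ^ 2 * (8 * a * (meanCurv f n x ^ 2 - gaussCurv f n x)
        + 16 * b * meanCurv f n x ^ 2)
      + c * (gradh h x ⬝ᵥ ((gmat f x)⁻¹ *ᵥ gradh h x)))

/-! Write `J = Dγ`. The chain rule gives `D(F ∘ γ) = (DF ∘ γ) J`, so the first and second
fundamental forms transform by congruence, `g̃ = Jᵀ g J` and `ĨI = Jᵀ II J`, and `∇h̃ = Jᵀ ∇h`.
Hence `g̃⁻¹ ĨI = J⁻¹ (g⁻¹ II) J` is similar to `g⁻¹ II`, so `H` and `K` are unchanged, the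
quadratic form `∇hᵀ g⁻¹ ∇h` is unchanged, and `√det g̃ = |det J| √det g`; the factor `|det J|`
is exactly the one in the change of variables formula. -/

section Jacobian

variable {ι κ : Type*} [Fintype ι] [DecidableEq ι] [Fintype κ]

def jacobian (F : (ι → ℝ) → (κ → ℝ)) (x : ι → ℝ) : Matrix κ ι ℝ :=
  LinearMap.toMatrix' (fderiv ℝ F x : (ι → ℝ) →ₗ[ℝ] κ → ℝ)

theorem jacobian_comp {μ : Type*} [Fintype μ] [DecidableEq μ]
    {F : (ι → ℝ) → (κ → ℝ)} {γ : (μ → ℝ) → (ι → ℝ)} {s : μ → ℝ}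
    (hF : DifferentiableAt ℝ F (γ s)) (hγ : DifferentiableAt ℝ γ s) :
    jacobian (F ∘ γ) s = jacobian F (γ s) * jacobian γ s := by
  rw [jacobian, fderiv_comp s hF hγ]
  exact LinearMap.toMatrix'_comp _ _

theorem ContinuousLinearMap.apply_eq_dotProduct (L : (ι → ℝ) →L[ℝ] ℝ) (v : ι → ℝ) :
    L v = (fun i => L (Pi.single i 1)) ⬝ᵥ v := by
  conv_lhs => rw [← Finset.univ_sum_single v]
  simp only [map_sum, dotProduct]
  refine Finset.sum_congr rfl fun i _ => ?_
  rw [mul_comm, ← smul_eq_mul, ← map_smul, ← Pi.single_smul', smul_eq_mul, mul_one]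

theorem det_jacobian (F : (ι → ℝ) → (ι → ℝ)) (x : ι → ℝ) :
    (jacobian F x).det = (fderiv ℝ F x).det :=
  LinearMap.det_toMatrix' _

end Jacobian

theorem Jmat_eq_jacobian (γ : (Fin 2 → ℝ) → (Fin 2 → ℝ)) (s : Fin 2 → ℝ) :
    Jmat γ s = jacobian γ s := rfl

theorem gmat_eq_jacobian (f : (Fin 2 → ℝ) → (Fin 3 → ℝ)) (x : Fin 2 → ℝ) :
    gmat f x = (jacobian f x)ᵀ * jacobian f x := by
  ext i j; rfl

theorem IImat_eq_jacobian (f n : (Fin 2 → ℝ) → (Fin 3 → ℝ)) (x : Fin 2 → ℝ) :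
    IImat f n x = -((jacobian n x)ᵀ * jacobian f x) := by
  ext i j; rfl

theorem gradh_comp {h : (Fin 2 → ℝ) → ℝ} {γ : (Fin 2 → ℝ) → (Fin 2 → ℝ)} {s : Fin 2 → ℝ}
    (hh : DifferentiableAt ℝ h (γ s)) (hγ : DifferentiableAt ℝ γ s) :
    gradh (h ∘ γ) s = (Jmat γ s)ᵀ *ᵥ gradh h (γ s) := by
  ext i
  rw [gradh, fderiv_comp s hh hγ, ContinuousLinearMap.comp_apply,
    ContinuousLinearMap.apply_eq_dotProduct, mulVec_transpose, vecMul]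
  rfl

section Congruence

variable {m R : Type*} [Fintype m] [DecidableEq m] [CommRing R] {J : Matrix m m R}

theorem inv_congr_mul_congr (hJ : IsUnit J.det) (A B : Matrix m m R) :
    (Jᵀ * A * J)⁻¹ * (Jᵀ * B * J) = J⁻¹ * (A⁻¹ * B) * J := by
  have hJT : IsUnit Jᵀ.det := by rwa [det_transpose]
  rw [Matrix.mul_inv_rev, Matrix.mul_inv_rev]
  simp only [Matrix.mul_assoc]
  rw [← Matrix.mul_assoc Jᵀ⁻¹, nonsing_inv_mul _ hJT, Matrix.one_mul]

theorem trace_inv_congr_mul_congr (hJ : IsUnit J.det) (A B : Matrix m m R) :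
    ((Jᵀ * A * J)⁻¹ * (Jᵀ * B * J)).trace = (A⁻¹ * B).trace := by
  rw [inv_congr_mul_congr hJ, trace_conj' ((isUnit_iff_isUnit_det J).mpr hJ)]

theorem det_inv_congr_mul_congr (hJ : IsUnit J.det) (A B : Matrix m m R) :
    ((Jᵀ * A * J)⁻¹ * (Jᵀ * B * J)).det = (A⁻¹ * B).det := by
  rw [inv_congr_mul_congr hJ, det_conj' ((isUnit_iff_isUnit_det J).mpr hJ)]

theorem dotProduct_inv_congr_mulVec (hJ : IsUnit J.det) (A : Matrix m m R) (v : m → R) :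
    (Jᵀ *ᵥ v) ⬝ᵥ ((Jᵀ * A * J)⁻¹ *ᵥ (Jᵀ *ᵥ v)) = v ⬝ᵥ (A⁻¹ *ᵥ v) := by
  have hJT : IsUnit Jᵀ.det := by rwa [det_transpose]
  rw [Matrix.mul_inv_rev, Matrix.mul_inv_rev, mulVec_mulVec, Matrix.mul_assoc, Matrix.mul_assoc,
    nonsing_inv_mul _ hJT, Matrix.mul_one, ← mulVec_mulVec, mulVec_transpose,
    ← dotProduct_mulVec, mulVec_mulVec, mul_nonsing_inv _ hJ, one_mulVec]

end Congruence

theorem sqrt_det_congr {m : Type*} [Fintype m] [DecidableEq m] (J A : Matrix m m ℝ) :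
    √(Jᵀ * A * J).det = |J.det| * √A.det := by
  rw [det_mul, det_mul, det_transpose, mul_right_comm, ← sq, Real.sqrt_mul (sq_nonneg _),
    Real.sqrt_sq_eq_abs]

section Reparametrization

variable {f n : (Fin 2 → ℝ) → (Fin 3 → ℝ)} {h : (Fin 2 → ℝ) → ℝ}
  {γ : (Fin 2 → ℝ) → (Fin 2 → ℝ)} {s : Fin 2 → ℝ}

theorem gmat_comp (hf : DifferentiableAt ℝ f (γ s)) (hγ : DifferentiableAt ℝ γ s) :
    gmat (f ∘ γ) s = (Jmat γ s)ᵀ * gmat f (γ s) * Jmat γ s := by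
  rw [gmat_eq_jacobian, gmat_eq_jacobian, jacobian_comp hf hγ, Jmat_eq_jacobian,
    transpose_mul, Matrix.mul_assoc, Matrix.mul_assoc, Matrix.mul_assoc]

theorem IImat_comp (hf : DifferentiableAt ℝ f (γ s)) (hn : DifferentiableAt ℝ n (γ s))
    (hγ : DifferentiableAt ℝ γ s) :
    IImat (f ∘ γ) (n ∘ γ) s = (Jmat γ s)ᵀ * IImat f n (γ s) * Jmat γ s := by
  rw [IImat_eq_jacobian, IImat_eq_jacobian, jacobian_comp hf hγ, jacobian_comp hn hγ,
    Jmat_eq_jacobian,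
    transpose_mul, Matrix.mul_neg, Matrix.neg_mul, Matrix.mul_assoc, Matrix.mul_assoc,
    Matrix.mul_assoc]

theorem meanCurv_comp (hf : DifferentiableAt ℝ f (γ s)) (hn : DifferentiableAt ℝ n (γ s))
    (hγ : DifferentiableAt ℝ γ s) (hJ : IsUnit (Jmat γ s).det) :
    meanCurv (f ∘ γ) (n ∘ γ) s = meanCurv f n (γ s) := by
  rw [meanCurv, meanCurv, gmat_comp hf hγ, IImat_comp hf hn hγ, trace_inv_congr_mul_congr hJ]

theorem gaussCurv_comp (hf : DifferentiableAt ℝ f (γ s)) (hn : DifferentiableAt ℝ n (γ s))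
    (hγ : DifferentiableAt ℝ γ s) (hJ : IsUnit (Jmat γ s).det) :
    gaussCurv (f ∘ γ) (n ∘ γ) s = gaussCurv f n (γ s) := by
  rw [gaussCurv, gaussCurv, gmat_comp hf hγ, IImat_comp hf hn hγ, det_inv_congr_mul_congr hJ]

theorem normalElasticIntegrand_comp (hf : DifferentiableAt ℝ f (γ s))
    (hn : DifferentiableAt ℝ n (γ s)) (hh : DifferentiableAt ℝ h (γ s))
    (hγ : DifferentiableAt ℝ γ s) (hJ : IsUnit (Jmat γ s).det) (a b c : ℝ) :
    normalElasticIntegrand (f ∘ γ) (n ∘ γ) (h ∘ γ) a b c s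
      = |(Jmat γ s).det| * normalElasticIntegrand f n h a b c (γ s) := by
  rw [normalElasticIntegrand, normalElasticIntegrand, meanCurv_comp hf hn hγ hJ,
    gaussCurv_comp hf hn hγ hJ, gradh_comp hh hγ, gmat_comp hf hγ,
    dotProduct_inv_congr_mulVec hJ, sqrt_det_congr, Function.comp_apply, mul_assoc]

end Reparametrization

theorem stmt19_general (U V : Set (Fin 2 → ℝ)) (hU : IsOpen U) (hV : IsOpen V)
    (γ : (Fin 2 → ℝ) → (Fin 2 → ℝ)) (f n : (Fin 2 → ℝ) → (Fin 3 → ℝ))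
    (h : (Fin 2 → ℝ) → ℝ) (a b c : ℝ)
    (hγ : ContDiffOn ℝ 1 γ V) (hbij : Set.BijOn γ V U)
    (hdet : ∀ s ∈ V, 0 < (Jmat γ s).det)
    (hf : ContDiffOn ℝ 1 f U)
    (hnC : ContDiffOn ℝ 1 n U)
    (hh : ContDiffOn ℝ 1 h U) :
    ∫ s in V, normalElasticIntegrand (f ∘ γ) (n ∘ γ) (h ∘ γ) a b c s
      = ∫ x in U, normalElasticIntegrand f n h a b c x := by
  have hγd : ∀ s ∈ V, DifferentiableAt ℝ γ s := fun s hs =>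
    (hγ.differentiableOn one_ne_zero).differentiableAt (hV.mem_nhds hs)
  rw [← hbij.image_eq, integral_image_eq_integral_abs_det_fderiv_smul volume hV.measurableSet
    (fun s hs => (hγd s hs).hasFDerivAt.hasFDerivWithinAt) hbij.injOn]
  refine setIntegral_congr_fun hV.measurableSet fun s hs => ?_
  have hx : U ∈ nhds (γ s) := hU.mem_nhds (hbij.mapsTo hs)
  rw [normalElasticIntegrand_comp ((hf.differentiableOn one_ne_zero).differentiableAt hx)
    ((hnC.differentiableOn one_ne_zero).differentiableAt hx)
    ((hh.differentiableOn one_ne_zero).differentiableAt hx) (hγd s hs) (hdet s hs).ne'.isUnit,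
    smul_eq_mul, Jmat_eq_jacobian, det_jacobian]

theorem stmt19 (U V : Set (Fin 2 → ℝ)) (hU : IsOpen U) (hV : IsOpen V)
    (γ : (Fin 2 → ℝ) → (Fin 2 → ℝ)) (f n : (Fin 2 → ℝ) → (Fin 3 → ℝ))
    (h : (Fin 2 → ℝ) → ℝ) (a b c : ℝ)
    (hγ : ContDiffOn ℝ 1 γ V) (hbij : Set.BijOn γ V U)
    (hdet : ∀ s ∈ V, 0 < (Jmat γ s).det)
    (hf : ContDiffOn ℝ 1 f U) (hg : ∀ x ∈ U, IsUnit (gmat f x))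
    (hnC : ContDiffOn ℝ 1 n U)
    (hortho : ∀ x ∈ U, n x ⬝ᵥ pd f x 0 = 0 ∧ n x ⬝ᵥ pd f x 1 = 0)
    (hh : ContDiffOn ℝ 1 h U)
    (hint : IntegrableOn (normalElasticIntegrand f n h a b c) U) :
    ∫ s in V, normalElasticIntegrand (f ∘ γ) (n ∘ γ) (h ∘ γ) a b c s
      = ∫ x in U, normalElasticIntegrand f n h a b c x :=
  stmt19_general U V hU hV γ f n h a b c hγ hbij hdet hf hnC hh
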